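/- Noiseless randomized Kaczmarz convergence: Let A be an m × n real matrix with full column rank and nonzero rows, Ax = b, and define iterates x_{k} = x_{k-1} + ((b_{i_k} − ⟨a_{i_k}, x_{k-1}⟩)/‖a_{i_k}‖²) a_{i_k} with i_k i.i.d., ℙ(i_k = i) = ‖a_i‖²/‖A‖_F². Then 𝔼‖x_k − x‖² ≤ (1 − 1/R)^k ‖x₀ − x‖², where R = ‖A⁻¹‖²‖A‖_F². -/

import Mathlib

open Finset

/-- Euclidean norm on `Fin k → ℝ`. -/
noncomputable def enorm {k : ℕ} (v : Fin k → ℝ) : ℝ := Real.sqrt (∑ j, v j ^ 2)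

/-- Standard inner product on `Fin k → ℝ`. -/
noncomputable def ip {k : ℕ} (v w : Fin k → ℝ) : ℝ := ∑ j, v j * w j

/-- Frobenius norm of a matrix. -/
noncomputable def frob {m n : ℕ} (A : Matrix (Fin m) (Fin n) ℝ) : ℝ :=
  Real.sqrt (∑ i, ∑ j, A i j ^ 2)

/-- `‖A⁻¹‖ = inf {M : M‖Az‖ ≥ ‖z‖ for all z}`. -/
noncomputable def invNorm {m n : ℕ} (A : Matrix (Fin m) (Fin n) ℝ) : ℝ :=
  sInf {M : ℝ | ∀ z : Fin n → ℝ, _root_.enorm z ≤ M * _root_.enorm (A.mulVec z)}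

/-- Kaczmarz iteration driven by a list of row indices (head = last step):
each step orthogonally projects onto the hyperplane `{z : ⟨a_i, z⟩ = c i}`. -/
noncomputable def kIter {m n : ℕ} (A : Matrix (Fin m) (Fin n) ℝ) (c : Fin m → ℝ)
    (x0 : Fin n → ℝ) : List (Fin m) → (Fin n → ℝ)
  | [] => x0
  | i :: l => kIter A c x0 l + ((c i - ip (A i) (kIter A c x0 l)) / _root_.enorm (A i) ^ 2) • A i

/-!
Write `e = z - x` for the error. A Kaczmarz step along row `aᵢ` replaces `e` by its orthogonal
projection onto `aᵢ^⊥`, so `‖e'‖² = ‖e‖² - ⟨aᵢ, e⟩² / ‖aᵢ‖²`. Averaging with weights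
`‖aᵢ‖² / ‖A‖_F²` the denominators cancel, and the expected new error is
`‖e‖² - ‖Ae‖² / ‖A‖_F² ≤ (1 - 1/R) ‖e‖²`, because `‖e‖ ≤ ‖A⁻¹‖ ‖Ae‖`. Conditioning on all but
the last index and inducting on the number of steps gives the factor `(1 - 1/R)^k`.
-/

open Matrix

theorem sum_prod_mul_le_pow_of_step_le {ι α : Type*} [Fintype ι] {p : ι → ℝ}
    (hp : ∀ i, 0 ≤ p i) {T : ι → α → α} {V : α → ℝ} {q : ℝ} (hq : 0 ≤ q)
    (hT : ∀ z, ∑ i, p i * V (T i z) ≤ q * V z)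
    {it : List ι → α} (hit : ∀ i l, it (i :: l) = T i (it l)) (k : ℕ) :
    ∑ f : Fin k → ι, (∏ j, p (f j)) * V (it (List.ofFn f)) ≤ q ^ k * V (it []) := by
  induction k with
  | zero => simp
  | succ k ih =>
    calc ∑ f : Fin (k + 1) → ι, (∏ j, p (f j)) * V (it (List.ofFn f))
        = ∑ g : Fin k → ι, (∏ j, p (g j)) * ∑ i, p i * V (T i (it (List.ofFn g))) := by
          rw [← (Fin.consEquiv fun _ => ι).sum_comp, Fintype.sum_prod_type, Finset.sum_comm]
          refine Finset.sum_congr rfl fun g _ => ?_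
          rw [Finset.mul_sum]
          refine Finset.sum_congr rfl fun i _ => ?_
          simp only [Fin.consEquiv_apply, Fin.prod_univ_succ, Fin.cons_zero, Fin.cons_succ,
            List.ofFn_succ, hit]
          ring
      _ ≤ ∑ g : Fin k → ι, (∏ j, p (g j)) * (q * V (it (List.ofFn g))) :=
          Finset.sum_le_sum fun g _ =>
            mul_le_mul_of_nonneg_left (hT _) (Finset.prod_nonneg fun j _ => hp (g j))
      _ = q * ∑ g : Fin k → ι, (∏ j, p (g j)) * V (it (List.ofFn g)) := by
          rw [Finset.mul_sum]
          exact Finset.sum_congr rfl fun g _ => by ring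
      _ ≤ q ^ (k + 1) * V (it []) := by
          rw [pow_succ', mul_assoc]
          exact mul_le_mul_of_nonneg_left ih hq

theorem dotProduct_self_sub_smul_proj {K ι : Type*} [Field K] [Fintype ι] (a e : ι → K) :
    (e - (a ⬝ᵥ e / a ⬝ᵥ a) • a) ⬝ᵥ (e - (a ⬝ᵥ e / a ⬝ᵥ a) • a) =
      e ⬝ᵥ e - (a ⬝ᵥ e) ^ 2 / a ⬝ᵥ a := by
  simp only [sub_dotProduct, dotProduct_sub, smul_dotProduct, dotProduct_smul, smul_eq_mul,
    dotProduct_comm e a]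
  rcases eq_or_ne (a ⬝ᵥ a) 0 with h | h
  · simp [h]
  · field_simp
    ring

theorem dotProduct_self_nonneg {R ι : Type*} [Ring R] [LinearOrder R] [IsStrictOrderedRing R]
    [Fintype ι] (v : ι → R) : 0 ≤ v ⬝ᵥ v :=
  Finset.sum_nonneg fun i _ => mul_self_nonneg (v i)

variable {m n : ℕ}

theorem ip_eq_dotProduct (v w : Fin n → ℝ) : ip v w = v ⬝ᵥ w := rfl

theorem enorm_sq_eq_dotProduct (v : Fin n → ℝ) : _root_.enorm v ^ 2 = v ⬝ᵥ v := by
  rw [_root_.enorm, Real.sq_sqrt (by positivity)]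
  simp only [dotProduct, sq]

theorem enorm_eq_norm_toLp (v : Fin n → ℝ) : _root_.enorm v = ‖WithLp.toLp 2 v‖ := by
  simp [_root_.enorm, EuclideanSpace.norm_eq]

theorem frob_sq_eq_sum_dotProduct (A : Matrix (Fin m) (Fin n) ℝ) :
    frob A ^ 2 = ∑ i, A i ⬝ᵥ A i := by
  rw [frob, Real.sq_sqrt (by positivity)]
  simp only [dotProduct, sq]

theorem mulVec_injective_of_rank_eq {K : Type*} [Field K] {ι : Type*} [Fintype ι]
    (A : Matrix ι (Fin n) K) (hA : A.rank = n) : Function.Injective A.mulVec := by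
  have hker := LinearMap.finrank_range_add_finrank_ker A.mulVecLin
  rw [← Matrix.rank, hA, Module.finrank_fin_fun, add_eq_left, Submodule.finrank_eq_zero] at hker
  exact LinearMap.ker_eq_bot.mp hker

theorem exists_enorm_le_mul_enorm_mulVec {A : Matrix (Fin m) (Fin n) ℝ}
    (hA : Function.Injective A.mulVec) :
    ∃ M, ∀ z, _root_.enorm z ≤ M * _root_.enorm (A *ᵥ z) := by
  have hker : LinearMap.ker (Matrix.toEuclideanLin A) = ⊥ :=
    LinearMap.ker_eq_bot.mpr fun u v huv =>
      WithLp.ofLp_injective 2 (hA (congrArg WithLp.ofLp huv))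
  obtain ⟨K, -, hK⟩ := (Matrix.toEuclideanLin A).exists_antilipschitzWith hker
  refine ⟨K, fun z => ?_⟩
  simpa [enorm_eq_norm_toLp] using hK.le_mul_dist (WithLp.toLp 2 z) 0

theorem enorm_le_invNorm_mul {A : Matrix (Fin m) (Fin n) ℝ} (hA : Function.Injective A.mulVec)
    (z : Fin n → ℝ) : _root_.enorm z ≤ invNorm A * _root_.enorm (A *ᵥ z) := by
  rcases eq_or_ne z 0 with rfl | hz
  · simp [_root_.enorm]
  have hAz : 0 < _root_.enorm (A *ᵥ z) := by
    rw [enorm_eq_norm_toLp, norm_pos_iff]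
    simpa using (hA.ne hz).trans_eq (Matrix.mulVec_zero A)
  rw [← div_le_iff₀ hAz]
  exact le_csInf (exists_enorm_le_mul_enorm_mulVec hA) fun M hM => (div_le_iff₀ hAz).mpr (hM z)

theorem dotProduct_self_le_invNorm_sq_mul {A : Matrix (Fin m) (Fin n) ℝ}
    (hA : Function.Injective A.mulVec) (z : Fin n → ℝ) :
    z ⬝ᵥ z ≤ invNorm A ^ 2 * (A *ᵥ z) ⬝ᵥ (A *ᵥ z) := by
  rw [← enorm_sq_eq_dotProduct, ← enorm_sq_eq_dotProduct, ← mul_pow]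
  exact pow_le_pow_left₀ (Real.sqrt_nonneg _) (enorm_le_invNorm_mul hA z) 2

theorem one_le_invNorm_sq_mul_frob_sq {A : Matrix (Fin m) (Fin n) ℝ}
    (hA : Function.Injective A.mulVec) (hn : 0 < n) : 1 ≤ invNorm A ^ 2 * frob A ^ 2 := by
  set j : Fin n := ⟨0, hn⟩
  have hcol : A.col j ⬝ᵥ A.col j ≤ frob A ^ 2 := by
    rw [frob_sq_eq_sum_dotProduct]
    refine Finset.sum_le_sum fun i _ => ?_
    simpa [dotProduct] using
      Finset.single_le_sum (f := fun l => A i l * A i l) (fun l _ => mul_self_nonneg _)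
        (Finset.mem_univ j)
  have h := dotProduct_self_le_invNorm_sq_mul hA (Pi.single j 1)
  rw [mulVec_single_one] at h
  simp only [dotProduct_single, Pi.single_eq_same, mul_one] at h
  calc 1 ≤ invNorm A ^ 2 * (A.col j ⬝ᵥ A.col j) := h
    _ ≤ invNorm A ^ 2 * frob A ^ 2 := by gcongr

theorem kaczmarz_step_sub {a x : Fin n → ℝ} {c : ℝ} (hx : ip a x = c) (z : Fin n → ℝ) :
    z + ((c - ip a z) / _root_.enorm a ^ 2) • a - x =
      (z - x) - (a ⬝ᵥ (z - x) / a ⬝ᵥ a) • a := by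
  rw [← hx, ip_eq_dotProduct, ip_eq_dotProduct, enorm_sq_eq_dotProduct, dotProduct_sub,
    ← neg_sub (a ⬝ᵥ z), neg_div, neg_smul]
  abel

theorem enorm_sq_kaczmarz_step {a x : Fin n → ℝ} {c : ℝ} (hx : ip a x = c) (z : Fin n → ℝ) :
    _root_.enorm (z + ((c - ip a z) / _root_.enorm a ^ 2) • a - x) ^ 2 =
      (z - x) ⬝ᵥ (z - x) - (a ⬝ᵥ (z - x)) ^ 2 / a ⬝ᵥ a := by
  rw [kaczmarz_step_sub hx, enorm_sq_eq_dotProduct, dotProduct_self_sub_smul_proj]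

theorem sum_mul_enorm_sq_kaczmarz_step_le {A : Matrix (Fin m) (Fin n) ℝ}
    (hA : Function.Injective A.mulVec) (hF : frob A ≠ 0) {x : Fin n → ℝ} {b : Fin m → ℝ}
    (hb : ∀ i, ip (A i) x = b i) (z : Fin n → ℝ) :
    ∑ i, _root_.enorm (A i) ^ 2 / frob A ^ 2 *
        _root_.enorm (z + ((b i - ip (A i) z) / _root_.enorm (A i) ^ 2) • A i - x) ^ 2 ≤
      (1 - 1 / (invNorm A ^ 2 * frob A ^ 2)) * _root_.enorm (z - x) ^ 2 := by
  obtain ⟨e, rfl⟩ : ∃ e, z = x + e := ⟨z - x, by abel⟩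
  have hterm : ∀ i, _root_.enorm (A i) ^ 2 / frob A ^ 2 *
      _root_.enorm (x + e + ((b i - ip (A i) (x + e)) / _root_.enorm (A i) ^ 2) • A i - x) ^ 2 =
        A i ⬝ᵥ A i * (e ⬝ᵥ e) / frob A ^ 2 - (A i ⬝ᵥ e) ^ 2 / frob A ^ 2 := by
    intro i
    rw [enorm_sq_kaczmarz_step (hb i), enorm_sq_eq_dotProduct, add_sub_cancel_left]
    rcases eq_or_ne (A i) 0 with h | h
    · simp [h]
    · field_simp [dotProduct_self_eq_zero.not.mpr h]
  have hsum : ∑ i, (A i ⬝ᵥ e) ^ 2 = (A *ᵥ e) ⬝ᵥ (A *ᵥ e) :=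
    Finset.sum_congr rfl fun i _ => sq _
  have hbound : e ⬝ᵥ e / invNorm A ^ 2 ≤ (A *ᵥ e) ⬝ᵥ (A *ᵥ e) :=
    div_le_of_le_mul₀ (sq_nonneg _) (dotProduct_self_nonneg _)
      ((dotProduct_self_le_invNorm_sq_mul hA e).trans_eq (mul_comm _ _))
  rw [Finset.sum_congr rfl fun i _ => hterm i, Finset.sum_sub_distrib, ← Finset.sum_div,
    ← Finset.sum_div, ← Finset.sum_mul, ← frob_sq_eq_sum_dotProduct, hsum,
    mul_div_cancel_left₀ _ (pow_ne_zero 2 hF), add_sub_cancel_left, enorm_sq_eq_dotProduct]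
  calc e ⬝ᵥ e - (A *ᵥ e) ⬝ᵥ (A *ᵥ e) / frob A ^ 2
      ≤ e ⬝ᵥ e - e ⬝ᵥ e / invNorm A ^ 2 / frob A ^ 2 := by gcongr
    _ = (1 - 1 / (invNorm A ^ 2 * frob A ^ 2)) * e ⬝ᵥ e := by ring

theorem stmt_16_general (m n : ℕ) (A : Matrix (Fin m) (Fin n) ℝ) (hrank : A.rank = n)
    (x x0 : Fin n → ℝ) (b : Fin m → ℝ)
    (hb : ∀ i, ip (A i) x = b i) (k : ℕ) :
    ∑ f : Fin k → Fin m, (∏ j, _root_.enorm (A (f j)) ^ 2 / frob A ^ 2) *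
        _root_.enorm (kIter A b x0 (List.ofFn f) - x) ^ 2 ≤
      (1 - 1 / (invNorm A ^ 2 * frob A ^ 2)) ^ k * _root_.enorm (x0 - x) ^ 2 := by
  rcases Nat.eq_zero_or_pos n with rfl | hn
  · simp [_root_.enorm]
  have hA := mulVec_injective_of_rank_eq A hrank
  have hR := one_le_invNorm_sq_mul_frob_sq hA hn
  have hF : frob A ≠ 0 := fun h => by norm_num [h] at hR
  have hq : 0 ≤ 1 - 1 / (invNorm A ^ 2 * frob A ^ 2) :=
    sub_nonneg.mpr (div_le_one_of_le₀ hR (by positivity))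
  exact sum_prod_mul_le_pow_of_step_le (fun i => by positivity) hq
    (T := fun i z => z + ((b i - ip (A i) z) / _root_.enorm (A i) ^ 2) • A i)
    (V := fun z => _root_.enorm (z - x) ^ 2) (sum_mul_enorm_sq_kaczmarz_step_le hA hF hb)
    (it := kIter A b x0) (fun _ _ => rfl) k

/-- Noiseless randomized Kaczmarz: expected exponential convergence. -/
theorem stmt_16 (m n : ℕ) (A : Matrix (Fin m) (Fin n) ℝ) (hrank : A.rank = n)
    (hrows : ∀ i, A i ≠ 0) (x x0 : Fin n → ℝ) (b : Fin m → ℝ)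
    (hb : ∀ i, ip (A i) x = b i) (k : ℕ) :
    ∑ f : Fin k → Fin m, (∏ j, _root_.enorm (A (f j)) ^ 2 / frob A ^ 2) *
        _root_.enorm (kIter A b x0 (List.ofFn f) - x) ^ 2 ≤
      (1 - 1 / (invNorm A ^ 2 * frob A ^ 2)) ^ k * _root_.enorm (x0 - x) ^ 2 :=
  stmt_16_general m n A hrank x x0 b hb k
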